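/- arXiv:1604.04446 — 5 statements merged into one kernel-verified Lean document; each statement's English description precedes it below -/
import Mathlib

section
/- Let ∇⁽¹⁾ and ∇⁽²⁾ be two almost hydrodynamically equivalent flat torsionless connections associated to commutative associative products ∘ and * respectively, meaning (d_{∇⁽¹⁾} - d_{∇⁽²⁾})(X*) = 0 for every vector field X. Then in flat coordinates for ∇⁽¹⁾ the Christoffel symbols Γ⁽²⁾ of ∇⁽²⁾ satisfy the symmetry relation Γ⁽²⁾ᵏ_{il} c*ˡ_{mj} = Γ⁽²⁾ᵏ_{jl} c*ˡ_{mi}, where c*ⁱ_{jk} are the structure constants of *. -/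
open scoped BigOperators

/-- If `∇⁽¹⁾` and `∇⁽²⁾` are almost hydrodynamically equivalent torsionless connections
(`(d_{∇⁽¹⁾} - d_{∇⁽²⁾})(X*) = 0` for every vector field `X`, where `(X*)ˡ_i = c*ˡ_{im}X^m`),
then, in flat coordinates for `∇⁽¹⁾` (where its Christoffel symbols vanish), the
Christoffel symbols of `∇⁽²⁾` satisfy `Γ⁽²⁾ᵏ_{il} c*ˡ_{mj} = Γ⁽²⁾ᵏ_{jl} c*ˡ_{mi}`.
The statement is pointwise: all data are the values at a fixed point. -/
theorem almost_hydro_equiv_symmetry (n : ℕ)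
    (Γ1 Γ2 : Fin n → Fin n → Fin n → ℂ)
    (c : Fin n → Fin n → Fin n → ℂ)
    -- flat coordinates for ∇⁽¹⁾: its Christoffel symbols vanish
    (hΓ1 : ∀ k l j, Γ1 k l j = 0)
    -- both connections are torsionless and the product is commutative
    (hΓ2sym : ∀ k i j, Γ2 k i j = Γ2 k j i)
    (hcsym : ∀ l i m, c l i m = c l m i)
    -- almost hydrodynamic equivalence: (d_{∇⁽¹⁾} - d_{∇⁽²⁾})(X*) = 0 for every X,
    -- i.e. Γ⁽¹⁾ᵏ_{lj}(X*)ˡ_i - Γ⁽¹⁾ᵏ_{li}(X*)ˡ_j = Γ⁽²⁾ᵏ_{lj}(X*)ˡ_i - Γ⁽²⁾ᵏ_{li}(X*)ˡ_j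
    (hequiv : ∀ (X : Fin n → ℂ) (k i j : Fin n),
      (∑ l, Γ1 k l j * (∑ m, c l i m * X m)) - (∑ l, Γ1 k l i * (∑ m, c l j m * X m))
        = (∑ l, Γ2 k l j * (∑ m, c l i m * X m)) - (∑ l, Γ2 k l i * (∑ m, c l j m * X m))) :
    ∀ k i j m, (∑ l, Γ2 k i l * c l m j) = ∑ l, Γ2 k j l * c l m i := by
  intro k i j m
  have h := hequiv (fun p => if p = m then 1 else 0) k j i
  simp only [hΓ1, zero_mul, Finset.sum_const_zero, sub_self, mul_ite, mul_one, mul_zero,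
    Finset.sum_ite_eq', Finset.mem_univ, if_true] at h
  have h' : (∑ l, Γ2 k l i * c l j m) = ∑ l, Γ2 k l j * c l i m := sub_eq_zero.mp h.symm
  calc (∑ l, Γ2 k i l * c l m j) = ∑ l, Γ2 k l i * c l j m := by
        refine Finset.sum_congr rfl fun l _ => by rw [hΓ2sym, hcsym]
    _ = ∑ l, Γ2 k l j * c l i m := h'
    _ = ∑ l, Γ2 k j l * c l m i := Finset.sum_congr rfl fun l _ => by rw [hΓ2sym, hcsym]
end

section
/- Suppose ∇⁽¹⁾ and ∇⁽²⁾ are almost hydrodynamically equivalent, E is the unit of the product *, the dual connection satisfies ∇⁽²⁾E = 0, and in the flat coordinates u¹,…,uⁿ for ∇⁽¹⁾ one has E = Σ_k d_k u^k ∂/∂u^k. Then the Christoffel symbols of ∇⁽²⁾ and the structure constants of * in these coordinates satisfy Γ̃⁽²⁾ᵏ_{jm} = - d_k c̃*ᵏ_{mj} (no sum over k). -/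
open scoped BigOperators

/-- Suppose `∇⁽¹⁾` and `∇⁽²⁾` are almost hydrodynamically equivalent (expressed, in flat
coordinates `u¹,…,uⁿ` of `∇⁽¹⁾`, by `Γ̃⁽²⁾ᵏ_{il} c̃*ˡ_{mj} = Γ̃⁽²⁾ᵏ_{jl} c̃*ˡ_{mi}`),
`E = Σ_k d_k u^k ∂_k` is the unit of `*`, and `∇⁽²⁾E = 0`.  Then
`Γ̃⁽²⁾ᵏ_{jm} = - d_k c̃*ᵏ_{mj}` (no sum over `k`).  Pointwise statement at a point `u`. -/
theorem dual_connection_eq_minus_d_times_dual_product (n : ℕ)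
    (Γ2 : Fin n → Fin n → Fin n → ℂ)
    (c : Fin n → Fin n → Fin n → ℂ)
    (d : Fin n → ℂ) (u : Fin n → ℂ) (E : Fin n → ℂ)
    -- the Euler vector field in the flat coordinates: E = Σ_k d_k u^k ∂_k
    (hE : ∀ k, E k = d k * u k)
    -- symmetries of the product and the connection
    (hcsym : ∀ l i m, c l i m = c l m i)
    (hΓ2sym : ∀ k i j, Γ2 k i j = Γ2 k j i)
    -- E is the unit of the product *
    (hunit : ∀ i j, (∑ l, c i j l * E l) = if i = j then (1 : ℂ) else 0)
    -- ∇⁽²⁾E = 0:  Γ̃⁽²⁾ᵏ_{jl} E^l = -∂_j E^k = -d_k δ^k_j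
    (hnablaE : ∀ k j, (∑ l, Γ2 k j l * E l) = -(d k) * (if k = j then (1 : ℂ) else 0))
    -- almost hydrodynamic equivalence in the flat coordinates of ∇⁽¹⁾
    (hequiv : ∀ k i j m, (∑ l, Γ2 k i l * c l m j) = ∑ l, Γ2 k j l * c l m i) :
    ∀ k j m, Γ2 k j m = -(d k) * c k m j := by
  intro k j m
  have key : ∑ i, (∑ l, Γ2 k j l * c l m i) * E i
      = ∑ i, (∑ l, Γ2 k i l * c l m j) * E i := by
    refine Finset.sum_congr rfl fun i _ => ?_
    rw [hequiv k j i m]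
  calc Γ2 k j m
      = ∑ l, Γ2 k j l * (if l = m then (1:ℂ) else 0) := by simp
    _ = ∑ l, Γ2 k j l * ∑ i, c l m i * E i := by
        refine Finset.sum_congr rfl fun l _ => ?_
        rw [hunit l m]
    _ = ∑ l, ∑ i, (Γ2 k j l * c l m i) * E i := by
        refine Finset.sum_congr rfl fun l _ => ?_
        rw [Finset.mul_sum]
        exact Finset.sum_congr rfl fun i _ => (mul_assoc _ _ _).symm
    _ = ∑ i, ∑ l, (Γ2 k j l * c l m i) * E i := Finset.sum_comm
    _ = ∑ i, (∑ l, Γ2 k j l * c l m i) * E i := by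
        refine Finset.sum_congr rfl fun i _ => ?_
        rw [Finset.sum_mul]
    _ = ∑ i, (∑ l, Γ2 k i l * c l m j) * E i := key
    _ = ∑ l, c l m j * (∑ i, Γ2 k l i * E i) := by
        simp only [Finset.sum_mul]
        rw [Finset.sum_comm]
        refine Finset.sum_congr rfl fun l _ => ?_
        rw [Finset.mul_sum]
        refine Finset.sum_congr rfl fun i _ => ?_
        rw [hΓ2sym k i l]; ring
    _ = ∑ l, c l m j * (-(d k) * (if k = l then (1:ℂ) else 0)) := by
        refine Finset.sum_congr rfl fun l _ => ?_
        rw [hnablaE k l]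
    _ = -(d k) * c k m j := by simp [mul_comm, mul_left_comm]
end

section
/- Let Γⁱ_{ij} (i≠j) be functions on an open subset of ℂⁿ with canonical coordinates u¹,…,uⁿ, and define the natural connection ∇⁽¹⁾ and dual connection ∇⁽²⁾ by: Γ⁽¹⁾ⁱ_{jk}=Γ⁽²⁾ⁱ_{jk}=0 for distinct i,j,k; Γ⁽¹⁾ⁱ_{ij}=Γ⁽²⁾ⁱ_{ij}=Γⁱ_{ij} for i≠j; Γ⁽¹⁾ⁱ_{jj}=-Γⁱ_{ij}, Γ⁽²⁾ⁱ_{jj}=-(uⁱ/uʲ)Γⁱ_{ij} for i≠j; Γ⁽¹⁾ⁱ_{ii}=-Σ_{l≠i}Γⁱ_{li}, Γ⁽²⁾ⁱ_{ii}=-Σ_{l≠i}(uˡ/uⁱ)Γⁱ_{li} - 1/uⁱ. Assume ∇⁽¹⁾ is flat, i.e. conditions ∂_jΓⁱ_{ik}+Γⁱ_{ij}Γⁱ_{ik}-Γⁱ_{ik}Γᵏ_{kj}-Γⁱ_{ij}Γʲ_{jk}=0 for distinct i,j,k, and Σ_l ∂_l Γⁱ_{ik}=0 hold. Then the condition E^l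 ∂_l Γⁱ_{ik} = -Γⁱ_{ik}, with E = Σ_k u^k ∂_k, is equivalent to ∇⁽¹⁾∇⁽¹⁾E = 0. -/
open scoped BigOperators

/-! In canonical coordinates `E^i = u^i`, so `∂E` is the identity and `∂∂E = 0`; the tensor
`(∇∇E)^i_{kj}` collapses to `Γ^i_{jk} + E Γ^i_{kj}`. Every Christoffel symbol of `∇⁽¹⁾` is
`0`, `±Γ^i_{ij}` or `-Σ_{l≠i} Γ^i_{li}`, and these are symmetric in the lower indices, so
`∇∇E = 0` says exactly that all of them are Euler-homogeneous of degree `-1`, which (curv3)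
asserts for the generators `Γ^i_{ik}`. -/

/-- Partial derivative in the `i`-th coordinate direction on `ℂⁿ`. -/
noncomputable def pd {n : ℕ} (i : Fin n) (f : (Fin n → ℂ) → ℂ) (p : Fin n → ℂ) : ℂ :=
  fderiv ℂ f p (Pi.single i 1)

/-- Second partial derivative `∂_i ∂_j f`. -/
noncomputable def sd {n : ℕ} (i j : Fin n) (f : (Fin n → ℂ) → ℂ) (p : Fin n → ℂ) : ℂ :=
  pd i (pd j f) p

section CoordinateDerivatives

variable {n : ℕ}

lemma pd_coord (l i : Fin n) (p : Fin n → ℂ) :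
    pd l (fun q => q i) p = if i = l then 1 else 0 := by
  have h : (fun q : Fin n → ℂ => q i) =
      ⇑(ContinuousLinearMap.proj (R := ℂ) (φ := fun _ => ℂ) i) := rfl
  simp only [pd, h, ContinuousLinearMap.fderiv, ContinuousLinearMap.proj_apply, Pi.single_apply]

lemma sd_coord (k j i : Fin n) (p : Fin n → ℂ) : sd k j (fun q => q i) p = 0 := by
  have h : pd j (fun q : Fin n → ℂ => q i) = fun _ => if i = j then 1 else 0 :=
    funext (pd_coord j i)
  simp [sd, h, pd]

noncomputable def eulerDeriv (f : (Fin n → ℂ) → ℂ) : (Fin n → ℂ) → ℂ :=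
  fun p => ∑ l, p l * pd l f p

@[simp]
lemma eulerDeriv_zero : eulerDeriv (0 : (Fin n → ℂ) → ℂ) = 0 := by
  ext p
  simp [eulerDeriv, pd]

lemma eulerDeriv_neg (f : (Fin n → ℂ) → ℂ) : eulerDeriv (-f) = -eulerDeriv f := by
  ext p
  simp [eulerDeriv, pd, fderiv_neg]

lemma eulerDeriv_sum {ι : Type*} (s : Finset ι) (f : ι → (Fin n → ℂ) → ℂ)
    (hf : ∀ m ∈ s, Differentiable ℂ (f m)) :
    eulerDeriv (∑ m ∈ s, f m) = ∑ m ∈ s, eulerDeriv (f m) := by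
  ext p
  have hpd : ∀ l, pd l (∑ m ∈ s, f m) p = ∑ m ∈ s, pd l (f m) p := fun l => by
    simp [pd, fderiv_sum fun m hm => (hf m hm).differentiableAt]
  simp only [eulerDeriv, hpd, Finset.sum_apply, Finset.mul_sum]
  exact Finset.sum_comm

end CoordinateDerivatives

lemma nabla_nabla_euler_eq {n : ℕ} (G : Fin n → Fin n → Fin n → (Fin n → ℂ) → ℂ)
    (p : Fin n → ℂ) (i k j : Fin n) :
    sd k j (fun q => q i) p
        + (∑ l, G i j l p * pd k (fun q => q l) p)
        + (∑ m, G i k m p * pd j (fun q => q m) p)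
        - (∑ m, G m k j p * pd m (fun q => q i) p)
        + (∑ l, p l * pd l (G i k j) p)
      = G i j k p + eulerDeriv (G i k j) p := by
  simp only [sd_coord, pd_coord, mul_ite, mul_one, mul_zero, Finset.sum_ite_eq,
    Finset.sum_ite_eq', Finset.mem_univ, if_true, eulerDeriv]
  ring

section NaturalConnection

variable {n : ℕ} (γ : Fin n → Fin n → (Fin n → ℂ) → ℂ)

/-- `Γ⁽¹⁾ⁱ_{jk}`, where `γ i j` stands for `Γⁱ_{ij}`. -/
noncomputable def naturalChristoffel (i j k : Fin n) : (Fin n → ℂ) → ℂ :=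
  if j = i ∧ k = i then -∑ l ∈ Finset.univ.erase i, γ i l
  else if j = i then γ i k
  else if k = i then γ i j
  else if j = k then -γ i j
  else 0

lemma naturalChristoffel_comm (i j k : Fin n) :
    naturalChristoffel γ i j k = naturalChristoffel γ i k j := by
  unfold naturalChristoffel
  by_cases hji : j = i <;> by_cases hki : k = i <;> simp_all [eq_comm]

lemma naturalChristoffel_self_left {i k : Fin n} (hik : i ≠ k) :
    naturalChristoffel γ i i k = γ i k := by
  simp [naturalChristoffel, hik.symm]

lemma eulerDeriv_naturalChristoffel (hdiff : ∀ i j, Differentiable ℂ (γ i j))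
    (hγ : ∀ i k, i ≠ k → eulerDeriv (γ i k) = -γ i k) (i j k : Fin n) :
    eulerDeriv (naturalChristoffel γ i j k) = -naturalChristoffel γ i j k := by
  unfold naturalChristoffel
  split_ifs with hii hji hki hjk
  · rw [eulerDeriv_neg, eulerDeriv_sum _ _ fun l _ => hdiff i l,
      Finset.sum_congr rfl fun l hl => hγ i l (Finset.ne_of_mem_erase hl).symm,
      Finset.sum_neg_distrib]
  · exact hγ i k fun h => hii ⟨hji, h.symm⟩
  · exact hγ i j fun h => hji h.symm
  · rw [eulerDeriv_neg, hγ i j fun h => hji h.symm]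
  · simp

end NaturalConnection

theorem curv3_iff_nabla_nabla_E_general (n : ℕ)
    (γ : Fin n → Fin n → (Fin n → ℂ) → ℂ)
    (hdiff : ∀ i j, Differentiable ℂ (γ i j))
    (G1 : Fin n → Fin n → Fin n → (Fin n → ℂ) → ℂ)
    -- the Christoffel symbols of the natural connection in canonical coordinates
    (hG1 : ∀ (i j k : Fin n) (p : Fin n → ℂ),
      G1 i j k p =
        if j = i ∧ k = i then -∑ l ∈ Finset.univ.erase i, γ i l p
        else if j = i then γ i k p
        else if k = i then γ i j p
        else if j = k then -(γ i j p)
        else 0) :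
    -- (curv3)  ⟺  ∇⁽¹⁾∇⁽¹⁾E = 0, where E^i(u) = u^i
    (∀ (p : Fin n → ℂ) (i k : Fin n), i ≠ k →
        (∑ l, p l * pd l (γ i k) p) = -(γ i k p))
    ↔ (∀ (p : Fin n → ℂ) (i k j : Fin n),
        sd k j (fun q => q i) p
          + (∑ l, G1 i j l p * pd k (fun q => q l) p)
          + (∑ m, G1 i k m p * pd j (fun q => q m) p)
          - (∑ m, G1 m k j p * pd m (fun q => q i) p)
          + (∑ l, p l * pd l (G1 i k j) p) = 0) := by
  obtain rfl : G1 = naturalChristoffel γ := by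
    funext i j k p
    rw [hG1, naturalChristoffel]
    split_ifs <;> simp [Finset.sum_apply]
  simp only [nabla_nabla_euler_eq]
  constructor
  · intro hcurv3 p i k j
    have hγ : ∀ i k, i ≠ k → eulerDeriv (γ i k) = -γ i k :=
      fun i k hik => funext fun p => hcurv3 p i k hik
    rw [eulerDeriv_naturalChristoffel γ hdiff hγ, naturalChristoffel_comm γ i j k]
    exact add_neg_cancel _
  · intro h p i k hik
    have hi := h p i k i
    rw [naturalChristoffel_self_left γ hik, naturalChristoffel_comm,
      naturalChristoffel_self_left γ hik] at hi
    exact eq_neg_of_add_eq_zero_right hi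

/-- In canonical coordinates `u¹,…,uⁿ`, let the natural connection `∇⁽¹⁾` be built from
the functions `Γⁱ_{ij}` (`i ≠ j`) by `Γ⁽¹⁾ⁱ_{jk}=0` for distinct `i,j,k`,
`Γ⁽¹⁾ⁱ_{ij}=Γⁱ_{ij}`, `Γ⁽¹⁾ⁱ_{jj}=-Γⁱ_{ij}` (`i≠j`), `Γ⁽¹⁾ⁱ_{ii}=-Σ_{l≠i}Γⁱ_{li}`.
Assume the flatness conditions (curv1) and (curv2) for `∇⁽¹⁾`.  Then the condition
(curv3) `E^l ∂_l Γⁱ_{ik} = -Γⁱ_{ik}` (with `E = Σ_k u^k ∂_k`) is equivalent to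
`∇⁽¹⁾∇⁽¹⁾E = 0`, where `(∇∇E)^i_{kj} = ∂_k∂_j E^i + Γ^i_{jl}∂_k E^l + Γ^i_{km}∂_j E^m
- Γ^m_{kj}∂_m E^i + E^l∂_lΓ^i_{kj}`. -/
theorem curv3_iff_nabla_nabla_E (n : ℕ)
    (γ : Fin n → Fin n → (Fin n → ℂ) → ℂ)
    (hdiff : ∀ i j, Differentiable ℂ (γ i j))
    (G1 : Fin n → Fin n → Fin n → (Fin n → ℂ) → ℂ)
    -- the Christoffel symbols of the natural connection in canonical coordinates
    (hG1 : ∀ (i j k : Fin n) (p : Fin n → ℂ),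
      G1 i j k p =
        if j = i ∧ k = i then -∑ l ∈ Finset.univ.erase i, γ i l p
        else if j = i then γ i k p
        else if k = i then γ i j p
        else if j = k then -(γ i j p)
        else 0)
    -- flatness condition (curv1)
    (hcurv1 : ∀ (p : Fin n → ℂ) (i j k : Fin n), i ≠ j → j ≠ k → i ≠ k →
      pd j (γ i k) p + γ i j p * γ i k p - γ i k p * γ k j p - γ i j p * γ j k p = 0)
    -- flatness condition (curv2): e^l ∂_l Γⁱ_{ik} = 0 with e = Σ_k ∂_k
    (hcurv2 : ∀ (p : Fin n → ℂ) (i k : Fin n), i ≠ k → (∑ l, pd l (γ i k) p) = 0) :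
    -- (curv3)  ⟺  ∇⁽¹⁾∇⁽¹⁾E = 0, where E^i(u) = u^i
    (∀ (p : Fin n → ℂ) (i k : Fin n), i ≠ k →
        (∑ l, p l * pd l (γ i k) p) = -(γ i k p))
    ↔ (∀ (p : Fin n → ℂ) (i k j : Fin n),
        sd k j (fun q => q i) p
          + (∑ l, G1 i j l p * pd k (fun q => q l) p)
          + (∑ m, G1 i k m p * pd j (fun q => q m) p)
          - (∑ m, G1 m k j p * pd m (fun q => q i) p)
          + (∑ l, p l * pd l (G1 i k j) p) = 0) :=
  curv3_iff_nabla_nabla_E_general n γ hdiff G1 hG1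
end

section
/- The function F = (1/8)u₃²u₁ + (1/8)u₃u₂² - (1/64)u₁²u₂² + (1/3840)u₁⁵ is a Frobenius potential for the orbit space of the Coxeter group A₃: with η the constant metric with η¹³ = η³¹ = η²² = 1 and all other entries zero, the structure constants cⁱ_{jk} = ηⁱˡ ∂³F/(∂uˡ∂uʲ∂uᵏ) define a commutative associative product with unit ∂/∂u₃ (up to normalization), i.e. F satisfies the WDVV associativity equations. -/
open scoped BigOperators

/-- Third partial derivative `∂_i ∂_j ∂_k f`. -/
noncomputable def td {n : ℕ} (i j k : Fin n) (f : (Fin n → ℂ) → ℂ) (p : Fin n → ℂ) : ℂ :=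
  pd i (fun q => pd j (pd k f) q) p

/-- The Frobenius potential of the orbit space of the Coxeter group `A₃`:
`F = (1/8)u₃²u₁ + (1/8)u₃u₂² - (1/64)u₁²u₂² + (1/3840)u₁⁵`. -/
noncomputable def FA3 (p : Fin 3 → ℂ) : ℂ :=
  (1/8) * (p 2)^2 * (p 0) + (1/8) * (p 2) * (p 1)^2
    - (1/64) * (p 0)^2 * (p 1)^2 + (1/3840) * (p 0)^5

/-- The inverse metric `ηⁱʲ` with `η¹³ = η³¹ = η²² = 1` and all other entries zero. -/
noncomputable def ηinvA3 : Fin 3 → Fin 3 → ℂ := ![![0,0,1], ![0,1,0], ![1,0,0]]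

/-- Structure constants `cⁱ_{jk} = ηⁱˡ ∂³F/∂uˡ∂uʲ∂uᵏ`. -/
noncomputable def cA3 (i j k : Fin 3) (p : Fin 3 → ℂ) : ℂ :=
  ∑ l, ηinvA3 i l * td l j k FA3 p

/-!
The structure constants are third derivatives of the polynomial `F` with the upper index
reflected by `η` (`ηⁱˡ = δ(l, i.rev)`), so they are symmetric in the lower indices because
partial derivatives of polynomials commute. Let `Cⱼ` be the matrix of multiplication by `∂ⱼ`,
`(Cⱼ)ⁱₖ = cⁱ_{jk}`. The WDVV equations say exactly that the `Cⱼ` commute pairwise. Since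
`C₃ = ¼·Id` (so `4∂₃` is the unit), the only relation left to check is the `3 × 3` matrix
identity `C₁C₂ = C₂C₁`; in the code the indices `1, 2, 3` are `0, 1, 2 : Fin 3`.
-/

open MvPolynomial

theorem MvPolynomial.pderiv_ofNat {R σ : Type*} [CommSemiring R] (i : σ) (n : ℕ) [n.AtLeastTwo] :
    pderiv i (no_index (OfNat.ofNat n : MvPolynomial σ R)) = 0 :=
  (pderiv i).map_natCast n

theorem MvPolynomial.pderiv_comm {R σ : Type*} [CommSemiring R] (i j : σ) (P : MvPolynomial σ R) :
    pderiv i (pderiv j P) = pderiv j (pderiv i P) := by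
  induction P using MvPolynomial.induction_on with
  | C a => simp
  | add P Q hP hQ => simp [hP, hQ]
  | mul_X P k hP =>
    simp only [Derivation.leibniz, map_add, smul_eq_mul, hP]
    rcases eq_or_ne k i with rfl | hi <;> rcases eq_or_ne k j with rfl | hj <;>
      simp [pderiv_X_of_ne, *] <;> ring

theorem MvPolynomial.hasFDerivAt_eval {𝕜 σ : Type*} [NontriviallyNormedField 𝕜] [Fintype σ]
    (P : MvPolynomial σ 𝕜) (p : σ → 𝕜) :
    HasFDerivAt (fun x => eval x P)
      (∑ i, eval p (pderiv i P) • ContinuousLinearMap.proj (R := 𝕜) (φ := fun _ : σ => 𝕜) i) p := by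
  classical
  induction P using MvPolynomial.induction_on with
  | C a =>
    simp only [eval_C]
    exact (hasFDerivAt_const a p).congr_fderiv (by ext v; simp)
  | add P Q hP hQ =>
    simp only [map_add]
    exact (hP.add hQ).congr_fderiv (by ext v; simp [add_mul, Finset.sum_add_distrib])
  | mul_X P j hP =>
    simp only [map_mul, eval_X]
    refine (hP.mul (hasFDerivAt_apply j p)).congr_fderiv ?_
    ext v
    simp [pderiv_X, Pi.single_apply, apply_ite, ite_mul, Finset.mul_sum, add_mul,
      Finset.sum_add_distrib, mul_assoc]

theorem pd_eval {n : ℕ} (i : Fin n) (P : MvPolynomial (Fin n) ℂ) :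
    pd i (fun x => eval x P) = fun x => eval x (pderiv i P) := by
  funext x
  simp [pd, (hasFDerivAt_eval P x).fderiv, Pi.single_apply]

theorem td_eval {n : ℕ} (i j k : Fin n) (P : MvPolynomial (Fin n) ℂ) :
    td i j k (fun x => eval x P) = fun x => eval x (pderiv i (pderiv j (pderiv k P))) := by
  funext x
  simp only [td, pd_eval]

def structureMatrix {R ι : Type*} (c : ι → ι → ι → R) (j : ι) : Matrix ι ι R :=
  Matrix.of fun i k => c i j k

theorem sum_mul_comm_of_commute_structureMatrix {R ι : Type*} [Semiring R] [Fintype ι]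
    {c : ι → ι → ι → R} {j k : ι} (h : Commute (structureMatrix c j) (structureMatrix c k))
    (i m : ι) : ∑ l, c i j l * c l k m = ∑ l, c i k l * c l j m := by
  simpa [structureMatrix, Matrix.mul_apply] using congrFun (congrFun h.eq i) m

theorem commute_fin_three_of_commute_zero_one {M : Type*} [Mul M] {a : Fin 3 → M}
    (h2 : ∀ x, Commute (a 2) x) (h01 : Commute (a 0) (a 1)) (j k : Fin 3) :
    Commute (a j) (a k) := by
  fin_cases j <;> fin_cases k <;>
    first
    | exact Commute.refl _
    | exact h01
    | exact h01.symm
    | exact h2 _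
    | exact (h2 _).symm

noncomputable def potentialA3 : MvPolynomial (Fin 3) ℂ :=
  C (1/8) * X 2 ^ 2 * X 0 + C (1/8) * X 2 * X 1 ^ 2 - C (1/64) * X 0 ^ 2 * X 1 ^ 2
    + C (1/3840) * X 0 ^ 5

theorem cA3_eq_eval_pderiv (i j k : Fin 3) (p : Fin 3 → ℂ) :
    cA3 i j k p = eval p (pderiv i.rev (pderiv j (pderiv k potentialA3))) := by
  have hF : FA3 = fun x => eval x potentialA3 := by
    funext x
    simp [FA3, potentialA3]
  fin_cases i <;> simp [cA3, ηinvA3, Fin.sum_univ_three, hF, td_eval]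

theorem cA3_comm (p : Fin 3 → ℂ) (i j k : Fin 3) : cA3 i j k p = cA3 i k j p := by
  simp only [cA3_eq_eval_pderiv, pderiv_comm k j]

theorem structureMatrix_cA3_zero (p : Fin 3 → ℂ) :
    structureMatrix (cA3 · · · p) 0 =
      !![0, 0, 1/4; -(p 1)/16, -(p 0)/16, 0; (p 0)^2/64, -(p 1)/16, 0] := by
  ext i k
  fin_cases i <;> fin_cases k <;>
    simp [structureMatrix, cA3_eq_eval_pderiv, potentialA3, pderiv_X, pderiv_ofNat,
      Pi.single_apply] <;>
    ring

theorem structureMatrix_cA3_one (p : Fin 3 → ℂ) :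
    structureMatrix (cA3 · · · p) 1 =
      !![0, 1/4, 0; -(p 0)/16, 0, 1/4; -(p 1)/16, -(p 0)/16, 0] := by
  ext i k
  fin_cases i <;> fin_cases k <;>
    simp [structureMatrix, cA3_eq_eval_pderiv, potentialA3, pderiv_X, pderiv_ofNat,
      Pi.single_apply] <;>
    ring

theorem structureMatrix_cA3_two (p : Fin 3 → ℂ) :
    structureMatrix (cA3 · · · p) 2 = (1/4 : ℂ) • 1 := by
  ext i k
  fin_cases i <;> fin_cases k <;>
    simp [structureMatrix, cA3_eq_eval_pderiv, potentialA3, pderiv_X, pderiv_ofNat,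
      Pi.single_apply] <;>
    ring

theorem commute_structureMatrix_cA3 (p : Fin 3 → ℂ) (j k : Fin 3) :
    Commute (structureMatrix (cA3 · · · p) j) (structureMatrix (cA3 · · · p) k) := by
  refine commute_fin_three_of_commute_zero_one (fun x => ?_) ?_ j k
  · rw [structureMatrix_cA3_two]
    exact (Commute.one_left x).smul_left _
  · rw [Commute, SemiconjBy, structureMatrix_cA3_zero, structureMatrix_cA3_one]
    ext i k
    fin_cases i <;> fin_cases k <;> simp [Matrix.mul_apply, Fin.sum_univ_three] <;> ring

/-- `F = (1/8)u₃²u₁ + (1/8)u₃u₂² - (1/64)u₁²u₂² + (1/3840)u₁⁵` is a Frobenius potential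
for the orbit space of `A₃`: the structure constants `cⁱ_{jk} = ηⁱˡ F_{ljk}` define a
commutative associative product (WDVV equations) whose unit is proportional to
`∂/∂u₃`. -/
theorem A3_frobenius_potential :
    -- WDVV associativity
    (∀ (p : Fin 3 → ℂ) (i j k m : Fin 3),
      (∑ l, cA3 i j l p * cA3 l k m p) = ∑ l, cA3 i k l p * cA3 l j m p) ∧
    -- commutativity
    (∀ (p : Fin 3 → ℂ) (i j k : Fin 3), cA3 i j k p = cA3 i k j p) ∧
    -- the unit of the product is ∂/∂u₃ up to normalization
    (∃ κ : ℂ, κ ≠ 0 ∧ ∀ (p : Fin 3 → ℂ) (i j : Fin 3),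
      cA3 i j 2 p = κ * (if i = j then (1 : ℂ) else 0)) := by
  refine ⟨fun p i j k m => ?_, cA3_comm, 1/4, by norm_num, fun p i j => ?_⟩
  · exact sum_mul_comm_of_commute_structureMatrix (commute_structureMatrix_cA3 p j k) i m
  · rw [cA3_comm]
    simpa [structureMatrix, Matrix.one_apply] using
      congrFun (congrFun (structureMatrix_cA3_two p) i) j
end

section
/- Let u¹,…,uⁿ be basic invariants of a finite Coxeter group W acting on ℝⁿ (or ℂⁿ) with degrees d₁ < d₂ ≤ … ≤ d_n, and let gⁱʲ(u) be the Euclidean contravariant metric expressed in the coordinates u. Then gⁱʲ is a polynomial in u¹,…,uⁿ that depends at most linearly on the highest-degree invariant uⁿ, so that ηⁱʲ := ∂gⁱʲ/∂uⁿ = (Lie_e g)ⁱʲ, with e = ∂/∂uⁿ, is independent of uⁿ. -/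
/-!
Since `gⁱʲ = Σ_k ∂_k uⁱ ∂_k uʲ` is homogeneous of degree `d_i + d_j - 2` in `p`, and the `u^k`
are algebraically independent and homogeneous of degree `d_k`, the polynomial `P i j` is
weighted homogeneous of weight `d_i + d_j - 2` when `u^k` is given weight `d_k`. A monomial
containing `(uⁿ)²` has weight at least `2 d_n > d_i + d_j - 2`, so none occurs.
-/

open MvPolynomial Finsupp

theorem Finsupp.apply_mul_le_weight {σ : Type*} (w : σ → ℕ) (f : σ →₀ ℕ) (s : σ) :
    f s * w s ≤ weight w f := by
  have hle : single s (f s) ≤ f := single_le_iff.mpr le_rfl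
  calc f s * w s = weight w (single s (f s)) := by simp [weight_single]
    _ ≤ weight w (single s (f s)) + weight w (f - single s (f s)) := Nat.le_add_right _ _
    _ = weight w f := by rw [← map_add, add_tsub_cancel_of_le hle]

namespace MvPolynomial

variable {R S ι σ : Type*}

theorem degreeOf_pderiv_le [CommSemiring R] (i : σ) (p : MvPolynomial σ R) :
    degreeOf i (pderiv i p) ≤ degreeOf i p - 1 := by
  refine degreeOf_le_iff.mpr fun m hm => ?_
  have hcoeff : coeff (m + single i 1) p ≠ 0 := by
    intro h
    rw [mem_support_iff, coeff_pderiv, h, zero_mul] at hm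
    exact hm rfl
  have hle := monomial_le_degreeOf i (mem_support_iff.mpr hcoeff)
  simp only [Finsupp.add_apply, single_eq_same] at hle
  omega

theorem IsWeightedHomogeneous.degreeOf_le [CommSemiring R] {w : σ → ℕ} {p : MvPolynomial σ R}
    {D : ℕ} (hp : p.IsWeightedHomogeneous w D) {i : σ} {k : ℕ} (hD : D < (k + 1) * w i) :
    degreeOf i p ≤ k := by
  refine degreeOf_le_iff.mpr fun m hm => ?_
  have hmD : m i * w i ≤ D := hp (mem_support_iff.mp hm) ▸ apply_mul_le_weight w m i
  by_contra! hk
  exact absurd (hmD.trans_lt hD) (not_lt.mpr (Nat.mul_le_mul_right _ hk))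

section Substitution

variable [CommSemiring R] [CommSemiring S] [Algebra R S] {w : ι → ℕ}
  {u : ι → MvPolynomial σ S}

theorem IsWeightedHomogeneous.aeval_isHomogeneous {q : MvPolynomial ι R} {m : ℕ}
    (hq : q.IsWeightedHomogeneous w m) (hu : ∀ i, (u i).IsHomogeneous (w i)) :
    (aeval u q).IsHomogeneous m := by
  induction hq using IsWeightedHomogeneous.induction_on with
  | zero => simpa using isHomogeneous_zero σ S m
  | add p q _ _ hp hq => simpa using hp.add hq
  | monomial α r hα =>
    rw [aeval_monomial, algebraMap_apply, ← hα, weight_apply, Finsupp.sum,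
      ← zero_add (∑ _ ∈ _, _)]
    exact (isHomogeneous_C σ _).mul
      (IsHomogeneous.prod _ _ _ fun i _ => by simpa [mul_comm] using (hu i).pow (α i))

theorem aeval_weightedHomogeneousComponent (hu : ∀ i, (u i).IsHomogeneous (w i))
    (q : MvPolynomial ι R) (N : ℕ) :
    aeval u (weightedHomogeneousComponent w N q) = homogeneousComponent N (aeval u q) := by
  conv_rhs => rw [← support_sum_monomial_coeff q]
  rw [weightedHomogeneousComponent_apply, map_sum, map_sum, map_sum, Finset.sum_filter]
  refine Finset.sum_congr rfl fun α _ => ?_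
  have hα := (isWeightedHomogeneous_monomial w α (coeff α q) rfl).aeval_isHomogeneous hu
  rw [homogeneousComponent_of_mem ((mem_homogeneousSubmodule _ _).mpr hα)]
  split_ifs <;> first | rfl | omega

end Substitution

theorem _root_.AlgebraicIndependent.isWeightedHomogeneous_of_aeval_isHomogeneous [CommRing R]
    [CommRing S] [Algebra R S] {w : ι → ℕ} {u : ι → MvPolynomial σ S}
    (halg : AlgebraicIndependent R u) (hu : ∀ i, (u i).IsHomogeneous (w i))
    {q : MvPolynomial ι R} {D : ℕ} (hq : (aeval u q).IsHomogeneous D) :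
    q.IsWeightedHomogeneous w D := by
  intro α hα
  by_contra hne
  have hcomp : weightedHomogeneousComponent w (weight w α) q = 0 := halg <| by
    rw [aeval_weightedHomogeneousComponent hu, map_zero,
      homogeneousComponent_of_mem ((mem_homogeneousSubmodule _ _).mpr hq), if_neg hne]
  exact hα (by simpa [coeff_weightedHomogeneousComponent] using congrArg (coeff α) hcomp)

end MvPolynomial

theorem coxeter_euclidean_metric_linear_in_top_invariant_general (n : ℕ)
    (u : Fin n → MvPolynomial (Fin n) ℝ)
    -- the uⁱ are algebraically independent (basic invariants)
    (halg : AlgebraicIndependent ℝ u)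
    (d : Fin n → ℕ)
    (hhom : ∀ i, (u i).IsHomogeneous (d i))
    (hd2 : ∀ i, 2 ≤ d i)
    (iN : Fin n)
    -- uⁿ := u iN is the invariant of highest degree
    (htop : ∀ i, d i ≤ d iN)
    (P : Fin n → Fin n → MvPolynomial (Fin n) ℝ)
    -- P i j expresses gⁱʲ as a polynomial in the invariants:
    -- gⁱʲ = Σ_k (∂uⁱ/∂p^k)(∂uʲ/∂p^k) = P i j (u¹,…,uⁿ)
    (hP : ∀ i j, MvPolynomial.aeval u (P i j)
        = ∑ k, (MvPolynomial.pderiv k (u i)) * (MvPolynomial.pderiv k (u j))) :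
    ∀ i j,
      (P i j).degreeOf iN ≤ 1 ∧
      (MvPolynomial.pderiv iN (P i j)).degreeOf iN = 0 := by
  intro i j
  have hmetric : (aeval u (P i j)).IsHomogeneous (d i - 1 + (d j - 1)) := by
    rw [hP i j]
    exact IsHomogeneous.sum _ _ _ fun k _ => (hhom i).pderiv.mul (hhom j).pderiv
  have hweighted := halg.isWeightedHomogeneous_of_aeval_isHomogeneous hhom hmetric
  have hlinear : (P i j).degreeOf iN ≤ 1 :=
    hweighted.degreeOf_le (by have := htop i; have := htop j; have := hd2 iN; omega)
  exact ⟨hlinear, by have := degreeOf_pderiv_le iN (P i j); omega⟩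

/-- Let `u¹,…,uⁿ` be basic invariants of a finite Coxeter group `W` acting orthogonally on
`ℝⁿ`, algebraically independent and homogeneous of degrees `d_i`, with `d_{iN}` the
highest degree.  Let `P i j` express the Euclidean contravariant metric
`gⁱʲ = Σ_k (∂uⁱ/∂p^k)(∂uʲ/∂p^k)` as a polynomial in the invariants `u`.  Then `gⁱʲ`
depends at most linearly on the highest-degree invariant `uⁿ` (`degreeOf iN (P i j) ≤ 1`),
so that `ηⁱʲ = ∂gⁱʲ/∂uⁿ = (Lie_e g)ⁱʲ` with `e = ∂/∂uⁿ` is independent of `uⁿ`. -/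
theorem coxeter_euclidean_metric_linear_in_top_invariant (n : ℕ)
    (W : Finset (Matrix (Fin n) (Fin n) ℝ))
    -- W consists of orthogonal transformations
    (hortho : ∀ A ∈ W, A * A.transpose = 1)
    (u : Fin n → MvPolynomial (Fin n) ℝ)
    -- the uⁱ are W-invariant polynomials
    (hinv : ∀ A ∈ W, ∀ i, MvPolynomial.aeval
        (fun j => ∑ k, MvPolynomial.C (A j k) * MvPolynomial.X k) (u i) = u i)
    -- the uⁱ are algebraically independent (basic invariants)
    (halg : AlgebraicIndependent ℝ u)
    (d : Fin n → ℕ)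
    (hhom : ∀ i, (u i).IsHomogeneous (d i))
    (hd2 : ∀ i, 2 ≤ d i)
    (iN : Fin n)
    -- uⁿ := u iN is the invariant of highest degree
    (htop : ∀ i, d i ≤ d iN)
    (P : Fin n → Fin n → MvPolynomial (Fin n) ℝ)
    -- P i j expresses gⁱʲ as a polynomial in the invariants:
    -- gⁱʲ = Σ_k (∂uⁱ/∂p^k)(∂uʲ/∂p^k) = P i j (u¹,…,uⁿ)
    (hP : ∀ i j, MvPolynomial.aeval u (P i j)
        = ∑ k, (MvPolynomial.pderiv k (u i)) * (MvPolynomial.pderiv k (u j))) :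
    ∀ i j,
      (P i j).degreeOf iN ≤ 1 ∧
      (MvPolynomial.pderiv iN (P i j)).degreeOf iN = 0 :=
  coxeter_euclidean_metric_linear_in_top_invariant_general n u halg d hhom hd2 iN htop P hP
end
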